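/- Two null metric hypersurface data {N,γ₁,ℓ₁,ℓ⁽²⁾₁} and {N,γ₂,ℓ₂,ℓ⁽²⁾₂} on the same manifold N are related by a gauge transformation if and only if γ₁ = γ₂. -/

import Mathlib

open Module LinearMap

variable {N : Type*} {T : N → Type*} [∀ p, AddCommGroup (T p)] [∀ p, Module ℝ (T p)]
  [∀ p, FiniteDimensional ℝ (T p)]

/-- The symmetric bilinear form `A` on `T ⊕ ℝ` associated to `(γ, ℓ, ℓ⁽²⁾)`. -/
def Aform {V : Type*} [AddCommGroup V] [Module ℝ V]
    (γ : V →ₗ[ℝ] V →ₗ[ℝ] ℝ) (ℓ : Dual ℝ V) (l2 : ℝ) (v w : V × ℝ) : ℝ :=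
  γ v.1 w.1 + v.2 * ℓ w.1 + w.2 * ℓ v.1 + v.2 * w.2 * l2

/-- Gauge action on the covector field: `G_{(z,ζ)}(ℓ) = z(ℓ + γ(ζ,·))`. -/
noncomputable def gaugeL (γ : ∀ p, T p →ₗ[ℝ] T p →ₗ[ℝ] ℝ) (z : N → ℝ) (ζ : ∀ p, T p)
    (ℓ : ∀ p, Dual ℝ (T p)) : ∀ p, Dual ℝ (T p) :=
  fun p ↦ z p • (ℓ p + γ p (ζ p))

/-- Gauge action on the scalar field: `G_{(z,ζ)}(ℓ⁽²⁾) = z²(ℓ⁽²⁾ + 2ℓ(ζ) + γ(ζ,ζ))`. -/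
noncomputable def gaugeL2 (γ : ∀ p, T p →ₗ[ℝ] T p →ₗ[ℝ] ℝ) (z : N → ℝ) (ζ : ∀ p, T p)
    (ℓ : ∀ p, Dual ℝ (T p)) (l2 : N → ℝ) : N → ℝ :=
  fun p ↦ (z p) ^ 2 * (l2 p + 2 * ℓ p (ζ p) + γ p (ζ p) (ζ p))

/-!
At a point, the radical of `γ` is a line `ℝ n`, and nondegeneracy of `A` forces `ℓ(n) ≠ 0`
for every admissible `ℓ`. Taking `z = ℓ₂(n) / ℓ₁(n)`, the covector `z⁻¹ ℓ₂ - ℓ₁` vanishes on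
the radical, so it equals `γ(ζ₀, ·)` for some `ζ₀`; moving `ζ₀` along `n` leaves `γ(ζ, ·)`
unchanged but shifts `ℓ⁽²⁾` by a nonzero multiple of the displacement, which fixes `ℓ⁽²⁾`.
-/

theorem Submodule.exists_eq_span_singleton_of_finrank_eq_one {K V : Type*} [DivisionRing K]
    [AddCommGroup V] [Module K V] {W : Submodule K V} (h : finrank K W = 1) :
    ∃ n ≠ (0 : V), W = K ∙ n := by
  obtain ⟨⟨n, hn⟩, hn0, hspan⟩ := finrank_eq_one_iff'.mp h
  refine ⟨n, fun h0 ↦ hn0 (Subtype.ext h0), le_antisymm (fun x hx ↦ ?_)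
    ((Submodule.span_singleton_le_iff_mem n W).mpr hn)⟩
  obtain ⟨c, hc⟩ := hspan ⟨x, hx⟩
  exact Submodule.mem_span_singleton.mpr ⟨c, congrArg Subtype.val hc⟩

theorem LinearMap.range_eq_dualAnnihilator_ker_of_symm {K V : Type*} [Field K]
    [AddCommGroup V] [Module K V] [FiniteDimensional K V] {γ : V →ₗ[K] V →ₗ[K] K}
    (hsym : ∀ x y, γ x y = γ y x) :
    range γ = (ker γ).dualAnnihilator := by
  have hflip : γ.flip = γ := LinearMap.ext₂ fun x y ↦ hsym y x
  rw [dualAnnihilator_ker_eq_range_flip, hflip]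

theorem exists_gauge_fixing {K V : Type*} [Field K] [NeZero (2 : K)] [AddCommGroup V]
    [Module K V] [FiniteDimensional K V] {γ : V →ₗ[K] V →ₗ[K] K}
    (hsym : ∀ x y, γ x y = γ y x) {n : V} (hker : ker γ = K ∙ n)
    {ℓ ω : Dual K V} (hℓ : ℓ n ≠ 0) (hω : ω n ≠ 0) (a u : K) :
    ∃ (z : K) (ζ : V), z ≠ 0 ∧ z • (ℓ + γ ζ) = ω ∧ z ^ 2 * (a + 2 * ℓ ζ + γ ζ ζ) = u := by
  set z := ω n / ℓ n
  have hz : z ≠ 0 := div_ne_zero hω hℓ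
  have hn : γ n = 0 := by
    rw [← mem_ker, hker]
    exact Submodule.mem_span_singleton_self n
  obtain ⟨ζ₀, hζ₀⟩ : z⁻¹ • ω - ℓ ∈ range γ := by
    rw [range_eq_dualAnnihilator_ker_of_symm hsym, hker, Submodule.mem_dualAnnihilator]
    intro x hx
    obtain ⟨c, rfl⟩ := Submodule.mem_span_singleton.mp hx
    simp only [map_smul, LinearMap.sub_apply, LinearMap.smul_apply, smul_eq_mul, z]
    field_simp
    ring
  set t := (u / z ^ 2 - (a + 2 * ℓ ζ₀ + γ ζ₀ ζ₀)) / (2 * ℓ n)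
  have ht : a + 2 * (ℓ ζ₀ + t * ℓ n) + γ ζ₀ ζ₀ = u / z ^ 2 := by
    simp only [t]
    field_simp
    ring
  have hγζ : γ (ζ₀ + t • n) = γ ζ₀ := by simp [hn]
  refine ⟨z, ζ₀ + t • n, hz, ?_, ?_⟩
  · rw [hγζ, hζ₀, add_sub_cancel, smul_inv_smul₀ hz]
  · have hγζζ : γ (ζ₀ + t • n) (ζ₀ + t • n) = γ ζ₀ ζ₀ := by simp [hγζ, hsym ζ₀ n, hn]
    rw [hγζζ, map_add, map_smul, smul_eq_mul, ht]
    field_simp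

theorem apply_ne_zero_of_Aform_nondegenerate {V : Type*} [AddCommGroup V] [Module ℝ V]
    {γ : V →ₗ[ℝ] V →ₗ[ℝ] ℝ} {ℓ : Dual ℝ V} {a : ℝ}
    (hA : ∀ v : V × ℝ, (∀ w : V × ℝ, Aform γ ℓ a v w = 0) → v = 0)
    {n : V} (hn : n ∈ ker γ) (hn0 : n ≠ 0) : ℓ n ≠ 0 := by
  intro hℓn
  have hγn : γ n = 0 := hn
  have hdeg : (n, (0 : ℝ)) = 0 := hA _ fun w ↦ by simp [Aform, hγn, hℓn]
  exact hn0 (congrArg Prod.fst hdeg)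

theorem gauge_equivalent_iff_same_gamma_general
    (γ₁ γ₂ : ∀ p, T p →ₗ[ℝ] T p →ₗ[ℝ] ℝ)
    (ℓ₁ ℓ₂ : ∀ p, Dual ℝ (T p)) (l2₁ l2₂ : N → ℝ)
    (hγ₁sym : ∀ p (x y : T p), γ₁ p x y = γ₁ p y x)
    (hrad₁ : ∀ p, Module.finrank ℝ (LinearMap.ker (γ₁ p)) = 1)
    (hA₁ : ∀ p, ∀ v : T p × ℝ,
      (∀ w : T p × ℝ, Aform (γ₁ p) (ℓ₁ p) (l2₁ p) v w = 0) → v = 0)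
    (hA₂ : ∀ p, ∀ v : T p × ℝ,
      (∀ w : T p × ℝ, Aform (γ₂ p) (ℓ₂ p) (l2₂ p) v w = 0) → v = 0) :
    (∃ (z : N → ℝ) (ζ : ∀ p, T p), (∀ p, z p ≠ 0) ∧
        γ₁ = γ₂ ∧ gaugeL γ₁ z ζ ℓ₁ = ℓ₂ ∧ gaugeL2 γ₁ z ζ ℓ₁ l2₁ = l2₂) ↔
      γ₁ = γ₂ := by
  refine ⟨fun ⟨_, _, _, hγ, _⟩ ↦ hγ, fun hγ ↦ ?_⟩
  subst hγ
  have gauge_fix : ∀ p, ∃ (z : ℝ) (ζ : T p), z ≠ 0 ∧ z • (ℓ₁ p + γ₁ p ζ) = ℓ₂ p ∧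
      z ^ 2 * (l2₁ p + 2 * ℓ₁ p ζ + γ₁ p ζ ζ) = l2₂ p := fun p ↦ by
    obtain ⟨n, hn0, hker⟩ := Submodule.exists_eq_span_singleton_of_finrank_eq_one (hrad₁ p)
    have hn : n ∈ ker (γ₁ p) := hker ▸ Submodule.mem_span_singleton_self n
    exact exists_gauge_fixing (hγ₁sym p) hker (apply_ne_zero_of_Aform_nondegenerate (hA₁ p) hn hn0)
      (apply_ne_zero_of_Aform_nondegenerate (hA₂ p) hn hn0) _ _
  choose z ζ hz hℓ hl2 using gauge_fix
  exact ⟨z, ζ, hz, rfl, funext hℓ, funext hl2⟩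

/-- Two null metric hypersurface data `{N,γ₁,ℓ₁,ℓ⁽²⁾₁}` and `{N,γ₂,ℓ₂,ℓ⁽²⁾₂}` on the same
manifold `N` are related by a gauge transformation if and only if `γ₁ = γ₂`. -/
theorem gauge_equivalent_iff_same_gamma
    (γ₁ γ₂ : ∀ p, T p →ₗ[ℝ] T p →ₗ[ℝ] ℝ)
    (ℓ₁ ℓ₂ : ∀ p, Dual ℝ (T p)) (l2₁ l2₂ : N → ℝ)
    (hγ₁sym : ∀ p (x y : T p), γ₁ p x y = γ₁ p y x)
    (hγ₂sym : ∀ p (x y : T p), γ₂ p x y = γ₂ p y x)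
    (hrad₁ : ∀ p, Module.finrank ℝ (LinearMap.ker (γ₁ p)) = 1)
    (hrad₂ : ∀ p, Module.finrank ℝ (LinearMap.ker (γ₂ p)) = 1)
    (hA₁ : ∀ p, ∀ v : T p × ℝ,
      (∀ w : T p × ℝ, Aform (γ₁ p) (ℓ₁ p) (l2₁ p) v w = 0) → v = 0)
    (hA₂ : ∀ p, ∀ v : T p × ℝ,
      (∀ w : T p × ℝ, Aform (γ₂ p) (ℓ₂ p) (l2₂ p) v w = 0) → v = 0) :
    (∃ (z : N → ℝ) (ζ : ∀ p, T p), (∀ p, z p ≠ 0) ∧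
        γ₁ = γ₂ ∧ gaugeL γ₁ z ζ ℓ₁ = ℓ₂ ∧ gaugeL2 γ₁ z ζ ℓ₁ l2₁ = l2₂) ↔
      γ₁ = γ₂ :=
  gauge_equivalent_iff_same_gamma_general γ₁ γ₂ ℓ₁ ℓ₂ l2₁ l2₂ hγ₁sym hrad₁ hA₁ hA₂
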